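/- arXiv:0707.1551 — 6 statements merged into one kernel-verified Lean document; each statement's English description precedes it below -/
import Mathlib

section
/- For every finite vertex set V and every contraction rate a ∈ [0,1), the asymptotic-period function (G,σ,T,x) ↦ P(F_{G,σ,T,a}, x), defined on the disjoint union over digraphs G=(V,A) and sign vectors σ ∈ {−1,1}^A of the cubes [0,1]^A × [0,1]^V (each cube carrying its Borel sigma-algebra) and taking values in ℕ ∪ {∞}, is a measurable function. -/
open MeasureTheory Filter Topology
open scoped ENNReal

/-- The Heaviside function: `H(s) = 1` if `s ≥ 0`, and `0` otherwise. -/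
noncomputable def heaviside (s : ℝ) : ℝ := if 0 ≤ s then 1 else 0

/-- Signs `{-1,1}` encoded by booleans: `true ↦ +1`, `false ↦ -1`. -/
def signVal (b : Bool) : ℝ := if b then 1 else -1

variable {V : Type*} [Fintype V] [DecidableEq V]

/-- In-degree of a vertex `v` in the arrow set `A`: `Id(v) = #{u : (u,v) ∈ A}`. -/
def inDeg {V : Type*} [DecidableEq V] (A : Finset (V × V)) (v : V) : ℕ :=
  (A.filter fun e => e.2 = v).card

/-- The regulatory map `F_{G,σ,T,a}(x)_v = a x_v + (1-a) (1/Id(v)) Σ_{(u,v)∈A} H(σ_{(u,v)}(x_u - T_{(u,v)}))`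
(the interaction term being `0` when `Id(v) = 0`, by the convention `(0 : ℝ)⁻¹ = 0`). -/
noncomputable def regMap {V : Type*} [Fintype V] [DecidableEq V] (A : Finset (V × V))
    (σ : {e // e ∈ A} → Bool) (T : {e // e ∈ A} → ℝ) (a : ℝ) (x : V → ℝ) : V → ℝ := fun v =>
  a * x v + (1 - a) * ((inDeg A v : ℝ)⁻¹ *
    ∑ e ∈ A.attach.filter (fun e => e.val.2 = v),
      heaviside (signVal (σ e) * (x e.val.1 - T e)))

/-- The cube `[0,1]^V`. -/
def cubeV (V : Type*) [Fintype V] : Set (V → ℝ) := Set.pi Set.univ fun _ => Set.Icc (0:ℝ) 1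

/-- The cube `[0,1]^A`. -/
def cubeA {V : Type*} [Fintype V] [DecidableEq V] (A : Finset (V × V)) :
    Set ({e // e ∈ A} → ℝ) := Set.pi Set.univ fun _ => Set.Icc (0:ℝ) 1

/-- The discontinuity set `Δ_T = {x ∈ [0,1]^V : x_u = T_{(u,v)} for some (u,v) ∈ A}`. -/
def discSet {V : Type*} [Fintype V] [DecidableEq V] (A : Finset (V × V))
    (T : {e // e ∈ A} → ℝ) : Set (V → ℝ) :=
  {x | x ∈ cubeV V ∧ ∃ e : {e // e ∈ A}, x e.val.1 = T e}

/-- `inf_{t ≥ 0} d_max(F^t(x), Δ_T)` as an extended nonnegative real (the metric on `V → ℝ`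
is the sup metric `d_max`, and the distance to the empty set is `∞`). -/
noncomputable def orbitGap {V : Type*} [Fintype V] [DecidableEq V] (A : Finset (V × V))
    (σ : {e // e ∈ A} → Bool) (T : {e // e ∈ A} → ℝ) (a : ℝ) (x : V → ℝ) : ℝ≥0∞ :=
  ⨅ t : ℕ, EMetric.infEdist ((regMap A σ T a)^[t] x) (discSet A T)

/-- `asympPeriod A σ T a x τ` says that the asymptotic period `P(F_{G,σ,T,a}, x)` equals `τ`:
there is a periodic point `y ∈ [0,1]^V` of minimal period `τ ≥ 1` whose orbit attracts that
of `x` (distances are the sup metric `d_max`). -/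
def asympPeriod {V : Type*} [Fintype V] [DecidableEq V] (A : Finset (V × V))
    (σ : {e // e ∈ A} → Bool) (T : {e // e ∈ A} → ℝ) (a : ℝ) (x : V → ℝ) (τ : ℕ) : Prop :=
  1 ≤ τ ∧ ∃ y ∈ cubeV V, (regMap A σ T a)^[τ] y = y ∧
    (∀ t, 0 < t → t < τ → (regMap A σ T a)^[t] y ≠ y) ∧
    Filter.Tendsto (fun t => dist ((regMap A σ T a)^[t] x) ((regMap A σ T a)^[t] y))
      Filter.atTop (nhds 0)

open scoped Classical in
/-- The asymptotic period function, with values in `ℕ ∪ {∞}`. -/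
noncomputable def asympP {V : Type*} [Fintype V] [DecidableEq V] (A : Finset (V × V))
    (σ : {e // e ∈ A} → Bool) (T : {e // e ∈ A} → ℝ) (a : ℝ) (x : V → ℝ) : ℕ∞ :=
  if h : ∃ τ, asympPeriod A σ T a x τ then ((Nat.find h : ℕ) : ℕ∞) else ⊤

/-! If `y` has period `τ ≥ 1` and attracts the orbit of `x`, then `F^[tτ] x → F^[tτ] y = y`, so `y`
is forced to be the limit of `t ↦ F^[tτ] x`. Replacing the existential quantifier over `y` by this
limit, which depends measurably on the parameters since the iterates do, turns "`P = τ`" into a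
countable combination of measurable conditions; no continuity of `F` is needed. -/

open Function

lemma measurable_from_sigma {ι : Type*} {β : ι → Type*} [∀ i, MeasurableSpace (β i)]
    {γ : Type*} [MeasurableSpace γ] {f : (Σ i, β i) → γ}
    (hf : ∀ i, Measurable fun b => f ⟨i, b⟩) : Measurable f := fun _ hs =>
  MeasurableSpace.measurableSet_iInf.mpr fun i => hf i hs

lemma measurable_dite_natFind {X : Type*} [MeasurableSpace X] {P : ℕ → X → Prop}
    [∀ x, DecidablePred (P · x)] [∀ x, Decidable (∃ n, P n x)]
    (hP : ∀ n, MeasurableSet {x | P n x}) :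
    Measurable fun x => if h : ∃ n, P n x then ((Nat.find h : ℕ) : ℕ∞) else ⊤ := by
  refine ENat.measurable_iff.mpr fun n => ?_
  have hpre : (fun x => if h : ∃ n, P n x then ((Nat.find h : ℕ) : ℕ∞) else ⊤) ⁻¹' {(n : ℕ∞)} =
      {x | P n x} ∩ ⋂ m < n, {x | P m x}ᶜ := by
    ext x
    simp only [Set.mem_preimage, Set.mem_singleton_iff, Set.mem_inter_iff, Set.mem_iInter,
      Set.mem_ofPred_eq, Set.mem_compl_iff]
    split_ifs with h
    · rw [Nat.cast_inj, Nat.find_eq_iff]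
    · simp only [ENat.top_ne_natCast, false_iff, not_and]
      exact fun hn => (h ⟨n, hn⟩).elim
  rw [hpre]
  exact (hP n).inter (.biInter (Set.to_countable _) fun m _ => (hP m).compl)

lemma measurable_iterate_apply {X E : Type*} [MeasurableSpace X] [MeasurableSpace E]
    {f : X → E → E} (hf : Measurable (uncurry f)) {x : X → E} (hx : Measurable x) (t : ℕ) :
    Measurable fun p => (f p)^[t] (x p) := by
  induction t with
  | zero => exact hx
  | succ t ih =>
    simp only [iterate_succ_apply']
    exact hf.comp (measurable_id.prodMk ih)

section AsymptoticPeriod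

variable {E : Type*} [MetricSpace E]

-- `asympPeriod A σ T a` is definitionally `HasAsymptoticPeriod (regMap A σ T a) (cubeV V)`.
def HasAsymptoticPeriod (f : E → E) (C : Set E) (x : E) (τ : ℕ) : Prop :=
  1 ≤ τ ∧ ∃ y ∈ C, f^[τ] y = y ∧ (∀ t, 0 < t → t < τ → f^[t] y ≠ y) ∧
    Tendsto (fun t => dist (f^[t] x) (f^[t] y)) atTop (𝓝 0)

lemma limUnder_iterate_mul_eq_of_isPeriodicPt [Nonempty E] {f : E → E} {x y : E} {τ : ℕ}
    (hτ : 1 ≤ τ) (hy : IsPeriodicPt f τ y)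
    (hxy : Tendsto (fun t => dist (f^[t] x) (f^[t] y)) atTop (𝓝 0)) :
    limUnder atTop (fun t => f^[t * τ] x) = y := by
  have hmul : Tendsto (fun t : ℕ => t * τ) atTop atTop :=
    tendsto_atTop_mono (fun t => Nat.le_mul_of_pos_right t hτ) tendsto_id
  refine Tendsto.limUnder_eq (tendsto_iff_dist_tendsto_zero.mpr ?_)
  simpa only [comp_def, (hy.const_mul _).eq] using hxy.comp hmul

variable {X : Type*} [MeasurableSpace X] [MeasurableSpace E] [BorelSpace E]
  [SecondCountableTopology E] {f : X → E → E}

lemma measurableSet_hasAsymptoticPeriod [CompleteSpace E] [Nonempty E]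
    (hf : Measurable (uncurry f)) {x : X → E} (hx : Measurable x) {C : Set E}
    (hC : MeasurableSet C) (τ : ℕ) :
    MeasurableSet {p | HasAsymptoticPeriod (f p) C (x p) τ} := by
  rcases Nat.eq_zero_or_pos τ with rfl | hτ
  · simp [HasAsymptoticPeriod]
  let y : X → E := fun p => limUnder atTop (fun t => (f p)^[t * τ] (x p))
  have hy : Measurable y := (StronglyMeasurable.limUnder fun t =>
    (measurable_iterate_apply hf hx (t * τ)).stronglyMeasurable).measurable
  have hset : {p | HasAsymptoticPeriod (f p) C (x p) τ} =
      {p | y p ∈ C ∧ (f p)^[τ] (y p) = y p ∧ (∀ t, 0 < t → t < τ → (f p)^[t] (y p) ≠ y p) ∧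
        Tendsto (fun t => dist ((f p)^[t] (x p)) ((f p)^[t] (y p))) atTop (𝓝 0)} := by
    ext p
    constructor
    · rintro ⟨-, z, hzC, hz, hzmin, hxz⟩
      obtain rfl : y p = z := limUnder_iterate_mul_eq_of_isPeriodicPt hτ hz hxz
      exact ⟨hzC, hz, hzmin, hxz⟩
    · rintro ⟨hyC, hyper, hymin, hxy⟩
      exact ⟨hτ, y p, hyC, hyper, hymin, hxy⟩
  rw [hset]
  refine (hC.preimage hy).inter (.inter ?_ (.inter ?_ ?_))
  · exact measurableSet_eq_fun (measurable_iterate_apply hf hy τ) hy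
  · change MeasurableSet {p | ∀ t, _}
    simp only [Set.ofPred_forall]
    exact .iInter fun t => .iInter fun _ => .iInter fun _ =>
      (measurableSet_eq_fun (measurable_iterate_apply hf hy t) hy).compl
  · exact measurableSet_tendsto (𝓝 0) fun t =>
      (measurable_iterate_apply hf hx t).dist (measurable_iterate_apply hf hy t)

end AsymptoticPeriod

@[fun_prop]
lemma measurable_heaviside : Measurable heaviside :=
  Measurable.ite measurableSet_Ici measurable_const measurable_const

lemma measurable_regMap_uncurry (A : Finset (V × V)) (σ : {e // e ∈ A} → Bool) (a : ℝ) :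
    Measurable fun q : ({e // e ∈ A} → ℝ) × (V → ℝ) => regMap A σ q.1 a q.2 := by
  unfold regMap
  fun_prop

lemma measurableSet_cubeV {V : Type*} [Fintype V] : MeasurableSet (cubeV V) :=
  .univ_pi fun _ => measurableSet_Icc

theorem asympP_measurable_general (V : Type*) [Fintype V] [DecidableEq V]
    (a : ℝ) :
    Measurable (fun p : (Σ A : Finset (V × V),
          ({e // e ∈ A} → Bool) × (↥(cubeA A) × ↥(cubeV V))) =>
        asympP p.1 p.2.1 p.2.2.1.val a p.2.2.2.val) := by
  refine measurable_from_sigma fun A => measurable_from_prod_countable_right fun σ => ?_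
  have hF : Measurable (uncurry fun p : ↥(cubeA A) × ↥(cubeV V) => regMap A σ p.1.val a) :=
    (measurable_regMap_uncurry A σ a).comp
      ((measurable_subtype_coe.comp (measurable_fst.comp measurable_fst)).prodMk measurable_snd)
  classical
  exact measurable_dite_natFind fun τ => measurableSet_hasAsymptoticPeriod hF
    (measurable_subtype_coe.comp measurable_snd) measurableSet_cubeV τ

/-- For every finite vertex set `V` and every `a ∈ [0,1)`, the asymptotic
period function `(G,σ,T,x) ↦ P(F_{G,σ,T,a}, x)`, defined on the disjoint union, over digraphs
`G = (V,A)` and sign vectors `σ ∈ {-1,1}^A`, of the cubes `[0,1]^A × [0,1]^V` (each with its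
Borel σ-algebra), with values in `ℕ ∪ {∞}`, is measurable. -/
theorem asympP_measurable (V : Type*) [Fintype V] [DecidableEq V]
    (a : ℝ) (ha0 : 0 ≤ a) (ha1 : a < 1) :
    Measurable (fun p : (Σ A : Finset (V × V),
          ({e // e ∈ A} → Bool) × (↥(cubeA A) × ↥(cubeV V))) =>
        asympP p.1 p.2.1 p.2.2.1.val a p.2.2.2.val) :=
  asympP_measurable_general V a
end

section
/- For every finite vertex set V, every digraph G=(V,A), every sign vector σ ∈ {−1,1}^A, and every a ∈ [0,1), the set {(T,x) ∈ [0,1]^A × [0,1]^V : the forward orbit {F_{G,σ,T,a}^t(x) : t ∈ ℕ} is disjoint from Δ_T} has full Lebesgue measure in [0,1]^A × [0,1]^V. -/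
open MeasureTheory Filter Topology
open scoped ENNReal

variable {V : Type*} [Fintype V] [DecidableEq V]

/-! Every coordinate of `F^t(x)` has the form `a^t x_v + r`, where `r` ranges over a countable set
that depends on `t` and `a` but not on `(T, x)`: each application of `F` multiplies by `a` and adds
`(1 - a)` times a rational number (a count of active arrows divided by an in-degree). Hence the
pairs `(T, x)` whose orbit meets `Δ_T` lie in countably many hyperplanes
`T_e = a^t x_u + r` of `ℝ^A × ℝ^V`, a Lebesgue-null set. -/

open MeasureTheory

/-- The offsets `r` with `f^[t] x v = a^t x v + r` when every step `f` adds an element of `C`. -/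
def affineOffsets (a : ℝ) (C : Set ℝ) : ℕ → Set ℝ
  | 0 => {0}
  | n + 1 => ⋃ c ∈ C, (fun r => a * r + c) '' affineOffsets a C n

theorem affineOffsets_countable (a : ℝ) {C : Set ℝ} (hC : C.Countable) (n : ℕ) :
    (affineOffsets a C n).Countable := by
  induction n with
  | zero => exact Set.countable_singleton 0
  | succ n ih => exact hC.biUnion fun c _ => ih.image _

theorem iterate_sub_pow_mul_mem_affineOffsets {ι : Type*} {f : (ι → ℝ) → ι → ℝ} {a : ℝ}
    {C : Set ℝ} (hf : ∀ x v, f x v - a * x v ∈ C) (t : ℕ) (x : ι → ℝ) (v : ι) :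
    f^[t] x v - a ^ t * x v ∈ affineOffsets a C t := by
  induction t with
  | zero => simp [affineOffsets]
  | succ t ih =>
    refine Set.mem_biUnion (hf (f^[t] x) v) ⟨_, ih, ?_⟩
    rw [Function.iterate_succ_apply']
    ring

theorem heaviside_eq_ratCast (s : ℝ) : heaviside s = ((if 0 ≤ s then 1 else 0 : ℚ) : ℝ) := by
  unfold heaviside
  split_ifs <;> simp

theorem regMap_sub_mul_mem_range {V : Type*} [Fintype V] [DecidableEq V] (A : Finset (V × V))
    (σ : {e // e ∈ A} → Bool) (T : {e // e ∈ A} → ℝ) (a : ℝ) (x : V → ℝ) (v : V) :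
    regMap A σ T a x v - a * x v ∈ Set.range fun q : ℚ => (1 - a) * (q : ℝ) := by
  refine ⟨(∑ e ∈ A.attach.filter (fun e => e.val.2 = v),
    (if 0 ≤ signVal (σ e) * (x e.val.1 - T e) then 1 else 0 : ℚ)) / inDeg A v, ?_⟩
  simp only [regMap, heaviside_eq_ratCast]
  push_cast
  ring

theorem addHaar_preimage_singleton_eq_zero {E : Type*} [NormedAddCommGroup E] [NormedSpace ℝ E]
    [MeasurableSpace E] [BorelSpace E] [FiniteDimensional ℝ E] (μ : Measure E)
    [μ.IsAddHaarMeasure] {L : E →ₗ[ℝ] ℝ} (hL : L ≠ 0) (r : ℝ) : μ (L ⁻¹' {r}) = 0 := by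
  obtain ⟨x₀, rfl⟩ := LinearMap.surjective_of_ne_zero hL r
  have hker : L ⁻¹' {L x₀} = (-x₀ + ·) ⁻¹' (LinearMap.ker L : Set E) := by
    ext x
    simp [sub_eq_zero, neg_add_eq_sub]
  rw [hker, measure_preimage_add]
  exact Measure.addHaar_submodule μ _ fun h => hL (LinearMap.ker_eq_top.mp h)

theorem volume_setOf_fst_eq_mul_snd_add {ι κ : Type*} [Fintype ι] [Fintype κ] (i : ι) (j : κ)
    (c r : ℝ) : volume {p : (ι → ℝ) × (κ → ℝ) | p.1 i = c * p.2 j + r} = 0 := by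
  classical
  let L : (ι → ℝ) × (κ → ℝ) →ₗ[ℝ] ℝ :=
    (LinearMap.proj i).comp (LinearMap.fst ℝ _ _) -
      c • (LinearMap.proj j).comp (LinearMap.snd ℝ _ _)
  have hL : ∀ p, L p = p.1 i - c * p.2 j := fun p => rfl
  have hL0 : L ≠ 0 := fun h => by simpa [hL] using LinearMap.congr_fun h (Pi.single i 1, 0)
  have hset : {p : (ι → ℝ) × (κ → ℝ) | p.1 i = c * p.2 j + r} = L ⁻¹' {r} := by
    ext p
    simp only [Set.mem_ofPred_eq, Set.mem_preimage, Set.mem_singleton_iff, hL]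
    constructor <;> intro h <;> linarith
  have : (volume : Measure ((ι → ℝ) × (κ → ℝ))).IsAddHaarMeasure := by
    rw [Measure.volume_eq_prod]
    exact Measure.prod.instIsAddHaarMeasure _ _
  rw [hset]
  exact addHaar_preimage_singleton_eq_zero volume hL0 r

theorem volume_setOf_exists_iterate_mem_discSet {V : Type*} [Fintype V] [DecidableEq V]
    (A : Finset (V × V)) (σ : {e // e ∈ A} → Bool) (a : ℝ) :
    volume {p : ({e // e ∈ A} → ℝ) × (V → ℝ) |
      ∃ t : ℕ, (regMap A σ p.1 a)^[t] p.2 ∈ discSet A p.1} = 0 := by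
  let C : Set ℝ := Set.range fun q : ℚ => (1 - a) * (q : ℝ)
  have hcover : {p : ({e // e ∈ A} → ℝ) × (V → ℝ) |
      ∃ t : ℕ, (regMap A σ p.1 a)^[t] p.2 ∈ discSet A p.1} ⊆
      ⋃ (t : ℕ) (e : {e // e ∈ A}) (r ∈ affineOffsets a C t),
        {p | p.1 e = a ^ t * p.2 e.val.1 + r} := by
    rintro p ⟨t, -, e, he⟩
    have hr := iterate_sub_pow_mul_mem_affineOffsets
      (regMap_sub_mul_mem_range A σ p.1 a) t p.2 e.val.1
    simp only [Set.mem_iUnion]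
    exact ⟨t, e, _, hr, show p.1 e = _ by rw [← he]; ring⟩
  refine measure_mono_null hcover (measure_iUnion_null fun t => measure_iUnion_null fun e => ?_)
  refine (measure_biUnion_null_iff
    (affineOffsets_countable a (Set.countable_range _) t)).2 fun r _ => ?_
  exact volume_setOf_fst_eq_mul_snd_add e e.val.1 (a ^ t) r

theorem volume_cubeA_prod_cubeV {V : Type*} [Fintype V] [DecidableEq V] (A : Finset (V × V)) :
    volume (cubeA A ×ˢ cubeV V) = 1 := by
  rw [Measure.volume_eq_prod, Measure.prod_prod, cubeA, cubeV, volume_pi_pi, volume_pi_pi]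
  simp [Real.volume_Icc]

theorem orbit_avoids_discontinuity_full_measure_general (V : Type*) [Fintype V] [DecidableEq V]
    (A : Finset (V × V)) (σ : {e // e ∈ A} → Bool) (a : ℝ) :
    volume {p : ({e // e ∈ A} → ℝ) × (V → ℝ) |
        p.1 ∈ cubeA A ∧ p.2 ∈ cubeV V ∧
        ∀ t : ℕ, (regMap A σ p.1 a)^[t] p.2 ∉ discSet A p.1} = 1 := by
  have hset : {p : ({e // e ∈ A} → ℝ) × (V → ℝ) |
        p.1 ∈ cubeA A ∧ p.2 ∈ cubeV V ∧
        ∀ t : ℕ, (regMap A σ p.1 a)^[t] p.2 ∉ discSet A p.1} =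
      (cubeA A ×ˢ cubeV V) \
        {p | ∃ t : ℕ, (regMap A σ p.1 a)^[t] p.2 ∈ discSet A p.1} := by
    ext p
    simp only [Set.mem_ofPred_eq, Set.mem_sdiff, Set.mem_prod, not_exists, and_assoc]
  rw [hset, measure_sdiff_null (volume_setOf_exists_iterate_mem_discSet A σ a),
    volume_cubeA_prod_cubeV]

/-- For every finite vertex set `V`, digraph `G=(V,A)`, sign vector
`σ ∈ {-1,1}^A` and `a ∈ [0,1)`, the set of pairs `(T,x) ∈ [0,1]^A × [0,1]^V` whose forward
orbit `{F_{G,σ,T,a}^t(x) : t ∈ ℕ}` is disjoint from `Δ_T` has full Lebesgue measure in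
`[0,1]^A × [0,1]^V` (which has total measure `1`). -/
theorem orbit_avoids_discontinuity_full_measure (V : Type*) [Fintype V] [DecidableEq V]
    (A : Finset (V × V)) (σ : {e // e ∈ A} → Bool) (a : ℝ) (ha0 : 0 ≤ a) (ha1 : a < 1) :
    volume {p : ({e // e ∈ A} → ℝ) × (V → ℝ) |
        p.1 ∈ cubeA A ∧ p.2 ∈ cubeV V ∧
        ∀ t : ℕ, (regMap A σ p.1 a)^[t] p.2 ∉ discSet A p.1} = 1 :=
  orbit_avoids_discontinuity_full_measure_general V A σ a
end

section
/- For every finite vertex set V, every digraph G=(V,A), every sign vector σ ∈ {−1,1}^A, and every a ∈ [0,1), the set O_{G,σ,a} := {(T,x) ∈ [0,1]^A × [0,1]^V : inf_{t≥0} d_max(F_{G,σ,T,a}^t(x), Δ_T) > 0} is an open subset of [0,1]^A × [0,1]^V. -/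
open MeasureTheory Filter Topology
open scoped ENNReal

variable {V : Type*} [Fintype V] [DecidableEq V]

/-! If the orbit of `x` keeps distance `ε > 0` from `Δ_T`, then (the orbit staying in the cube)
every coordinate `F^t(x)_u` stays at least `ε` away from every threshold `T_(u,v)`. For `(T', x')`
within `ε/4` of `(T, x)`, induction on `t` shows that the two orbits stay within `ε/4` of each
other: all Heaviside terms then agree, so one step only multiplies the difference by `a`. Hence the
perturbed orbit keeps distance `ε/2` from `Δ_T'`. -/

lemma heaviside_mem_Icc (s : ℝ) : heaviside s ∈ Set.Icc (0 : ℝ) 1 := by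
  unfold heaviside; split_ifs <;> norm_num

lemma heaviside_mul_eq_of_abs_sub_lt (s : ℝ) {r r' : ℝ} (h : |r' - r| < |r|) :
    heaviside (s * r) = heaviside (s * r') := by
  have hrr : 0 < r * r' := by
    rcases abs_lt.1 h with ⟨h1, h2⟩
    rcases lt_trichotomy r 0 with hr | hr | hr
    · rw [abs_of_neg hr] at h1 h2; nlinarith
    · simp only [hr, sub_zero, abs_zero] at h; exact absurd h (abs_nonneg r').not_gt
    · rw [abs_of_pos hr] at h1 h2; nlinarith
  unfold heaviside
  congr 1
  apply propext
  constructor <;> intro hs <;> nlinarith [mul_self_nonneg r, mul_self_nonneg r']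

lemma inv_card_mul_sum_mem_Icc {ι : Type*} (s : Finset ι) {f : ι → ℝ}
    (hf : ∀ i ∈ s, f i ∈ Set.Icc (0 : ℝ) 1) :
    (s.card : ℝ)⁻¹ * ∑ i ∈ s, f i ∈ Set.Icc (0 : ℝ) 1 := by
  rcases s.eq_empty_or_nonempty with rfl | hs
  · simp
  have hsum : ∑ i ∈ s, f i ≤ s.card := by
    simpa using Finset.sum_le_sum fun i hi => (hf i hi).2
  refine ⟨mul_nonneg (by positivity) (Finset.sum_nonneg fun i hi => (hf i hi).1), ?_⟩
  rw [inv_mul_le_iff₀ (by exact_mod_cast hs.card_pos)]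
  simpa using hsum

lemma abs_sub_sub_sub_le_dist_add_dist {ι κ : Type*} [Fintype ι] [Fintype κ]
    (z z' : ι → ℝ) (T T' : κ → ℝ) (u : ι) (e : κ) :
    |(z' u - T' e) - (z u - T e)| ≤ dist z' z + dist T' T :=
  calc |(z' u - T' e) - (z u - T e)| = |(z' u - z u) - (T' e - T e)| := by ring_nf
    _ ≤ |z' u - z u| + |T' e - T e| := abs_sub _ _
    _ ≤ dist z' z + dist T' T := by
      rw [← Real.dist_eq, ← Real.dist_eq]
      exact add_le_add (dist_le_pi_dist z' z u) (dist_le_pi_dist T' T e)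

lemma card_filter_attach {α : Type*} (s : Finset α) (p : α → Prop) [DecidablePred p] :
    (s.attach.filter fun e => p e.val).card = (s.filter p).card := by
  rw [Finset.filter_attach p s, Finset.card_map, Finset.card_attach]

section

variable (A : Finset (V × V)) (σ : {e // e ∈ A} → Bool)

lemma regMap_mem_cubeV (T : {e // e ∈ A} → ℝ) {a : ℝ} (ha0 : 0 ≤ a) (ha1 : a ≤ 1)
    {x : V → ℝ} (hx : x ∈ cubeV V) : regMap A σ T a x ∈ cubeV V := by
  intro v _
  obtain ⟨hx0, hx1⟩ := hx v (Set.mem_univ v)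
  have hc := inv_card_mul_sum_mem_Icc (A.attach.filter fun e => e.val.2 = v)
    fun e _ => heaviside_mem_Icc (signVal (σ e) * (x e.val.1 - T e))
  rw [card_filter_attach A (fun e => e.2 = v)] at hc
  obtain ⟨hc0, hc1⟩ := hc
  constructor <;> simp only [regMap, inDeg] <;> nlinarith

lemma iterate_regMap_mem_cubeV (T : {e // e ∈ A} → ℝ) {a : ℝ} (ha0 : 0 ≤ a) (ha1 : a ≤ 1)
    {x : V → ℝ} (hx : x ∈ cubeV V) (t : ℕ) : (regMap A σ T a)^[t] x ∈ cubeV V := by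
  induction t with
  | zero => exact hx
  | succ t ih => rw [Function.iterate_succ_apply']; exact regMap_mem_cubeV A σ T ha0 ha1 ih

lemma dist_regMap_le {T T' : {e // e ∈ A} → ℝ} (a : ℝ) {x x' : V → ℝ}
    (hH : ∀ e : {e // e ∈ A}, heaviside (signVal (σ e) * (x' e.val.1 - T' e)) =
      heaviside (signVal (σ e) * (x e.val.1 - T e))) :
    dist (regMap A σ T' a x') (regMap A σ T a x) ≤ |a| * dist x' x := by
  refine (dist_pi_le_iff (by positivity)).2 fun v => ?_
  have hsub : regMap A σ T' a x' v - regMap A σ T a x v = a * (x' v - x v) := by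
    simp only [regMap, hH]; ring
  rw [Real.dist_eq, hsub, abs_mul, ← Real.dist_eq]
  exact mul_le_mul_of_nonneg_left (dist_le_pi_dist x' x v) (abs_nonneg a)

lemma dist_iterate_regMap_le {a : ℝ} (ha : |a| ≤ 1) {T T' : {e // e ∈ A} → ℝ}
    {x x' : V → ℝ} {ε δ : ℝ} (hδε : 2 * δ < ε)
    (hfar : ∀ t (e : {e // e ∈ A}), ε ≤ |(regMap A σ T a)^[t] x e.val.1 - T e|)
    (hT : dist T' T ≤ δ) (hx : dist x' x ≤ δ) (t : ℕ) :
    dist ((regMap A σ T' a)^[t] x') ((regMap A σ T a)^[t] x) ≤ δ := by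
  induction t with
  | zero => exact hx
  | succ t ih =>
    rw [Function.iterate_succ_apply', Function.iterate_succ_apply']
    have hH : ∀ e : {e // e ∈ A},
        heaviside (signVal (σ e) * ((regMap A σ T' a)^[t] x' e.val.1 - T' e)) =
        heaviside (signVal (σ e) * ((regMap A σ T a)^[t] x e.val.1 - T e)) := fun e =>
      (heaviside_mul_eq_of_abs_sub_lt _ <| by
        linarith [hfar t e, abs_sub_sub_sub_le_dist_add_dist ((regMap A σ T a)^[t] x)
          ((regMap A σ T' a)^[t] x') T T' e.val.1 e]).symm
    calc _ ≤ |a| * dist ((regMap A σ T' a)^[t] x') ((regMap A σ T a)^[t] x) :=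
          dist_regMap_le A σ a hH
      _ ≤ 1 * δ := mul_le_mul ha ih dist_nonneg zero_le_one
      _ = δ := one_mul δ

lemma le_abs_sub_iterate_regMap {a : ℝ} (ha : |a| ≤ 1) {T T' : {e // e ∈ A} → ℝ}
    {x x' : V → ℝ} {ε δ : ℝ} (hδε : 2 * δ < ε)
    (hfar : ∀ t (e : {e // e ∈ A}), ε ≤ |(regMap A σ T a)^[t] x e.val.1 - T e|)
    (hT : dist T' T ≤ δ) (hx : dist x' x ≤ δ) (t : ℕ) (e : {e // e ∈ A}) :
    ε - 2 * δ ≤ |(regMap A σ T' a)^[t] x' e.val.1 - T' e| := by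
  have hsub := abs_sub_sub_sub_le_dist_add_dist ((regMap A σ T a)^[t] x)
    ((regMap A σ T' a)^[t] x') T T' e.val.1 e
  rw [abs_sub_comm] at hsub
  linarith [hfar t e, dist_iterate_regMap_le A σ ha hδε hfar hT hx t,
    abs_sub_abs_le_abs_sub ((regMap A σ T a)^[t] x e.val.1 - T e)
      ((regMap A σ T' a)^[t] x' e.val.1 - T' e)]

lemma infEDist_discSet_le {T : {e // e ∈ A} → ℝ} {z : V → ℝ} (hz : z ∈ cubeV V)
    (e : {e // e ∈ A}) (hTe : T e ∈ Set.Icc (0 : ℝ) 1) :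
    Metric.infEDist z (discSet A T) ≤ ENNReal.ofReal |z e.val.1 - T e| := by
  have hmem : Function.update z e.val.1 (T e) ∈ discSet A T := by
    refine ⟨fun u _ => ?_, e, Function.update_self _ _ _⟩
    rcases eq_or_ne u e.val.1 with rfl | hu
    · rw [Function.update_self]; exact hTe
    · rw [Function.update_of_ne hu]; exact hz u (Set.mem_univ u)
  refine (Metric.infEDist_le_edist_of_mem hmem).trans ((edist_pi_le_iff).2 fun u => ?_)
  rcases eq_or_ne u e.val.1 with rfl | hu
  · rw [Function.update_self, edist_dist, Real.dist_eq]
  · simp [Function.update_of_ne hu]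

lemma ofReal_le_infEDist_discSet {T : {e // e ∈ A} → ℝ} {z : V → ℝ} {r : ℝ}
    (hr : ∀ e : {e // e ∈ A}, r ≤ |z e.val.1 - T e|) :
    ENNReal.ofReal r ≤ Metric.infEDist z (discSet A T) := by
  refine Metric.le_infEDist.2 ?_
  rintro y ⟨-, e, hye⟩
  calc ENNReal.ofReal r ≤ ENNReal.ofReal |z e.val.1 - T e| := ENNReal.ofReal_le_ofReal (hr e)
    _ = edist (z e.val.1) (y e.val.1) := by rw [hye, edist_dist, Real.dist_eq]
    _ ≤ edist z y := edist_le_pi_edist z y _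

lemma le_abs_sub_of_ofReal_le_orbitGap {T : {e // e ∈ A} → ℝ} {a : ℝ} (ha0 : 0 ≤ a)
    (ha1 : a ≤ 1) (hT : T ∈ cubeA A) {x : V → ℝ} (hx : x ∈ cubeV V) {r : ℝ}
    (hr : ENNReal.ofReal r ≤ orbitGap A σ T a x) (t : ℕ) (e : {e // e ∈ A}) :
    r ≤ |(regMap A σ T a)^[t] x e.val.1 - T e| :=
  (ENNReal.ofReal_le_ofReal_iff (abs_nonneg _)).1 <| hr.trans <| (iInf_le _ t).trans <|
    infEDist_discSet_le A (iterate_regMap_mem_cubeV A σ T ha0 ha1 hx t) e (hT e (Set.mem_univ e))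

lemma ofReal_le_orbitGap {T : {e // e ∈ A} → ℝ} {a : ℝ} {x : V → ℝ} {r : ℝ}
    (hr : ∀ t (e : {e // e ∈ A}), r ≤ |(regMap A σ T a)^[t] x e.val.1 - T e|) :
    ENNReal.ofReal r ≤ orbitGap A σ T a x :=
  le_iInf fun t => ofReal_le_infEDist_discSet A (hr t)

end

/-- For every finite vertex set `V`, digraph `G=(V,A)`, sign vector
`σ ∈ {-1,1}^A` and `a ∈ [0,1)`, the set
`O_{G,σ,a} = {(T,x) ∈ [0,1]^A × [0,1]^V : inf_{t≥0} d_max(F_{G,σ,T,a}^t(x), Δ_T) > 0}`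
is an open subset of `[0,1]^A × [0,1]^V` (with its subspace topology). -/
theorem orbitGap_pos_isOpen (V : Type*) [Fintype V] [DecidableEq V]
    (A : Finset (V × V)) (σ : {e // e ∈ A} → Bool) (a : ℝ) (ha0 : 0 ≤ a) (ha1 : a < 1) :
    IsOpen {p : ↥(cubeA A ×ˢ cubeV V) | 0 < orbitGap A σ p.val.1 a p.val.2} := by
  rw [Metric.isOpen_iff]
  rintro ⟨⟨T, x⟩, hT, hx⟩ hgap
  obtain ⟨ε, -, hε, hεgap⟩ := ENNReal.lt_iff_exists_real_btwn.1 hgap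
  rw [ENNReal.ofReal_pos] at hε
  have hfar := le_abs_sub_of_ofReal_le_orbitGap A σ ha0 ha1.le hT hx hεgap.le
  refine ⟨ε / 4, by positivity, fun ⟨⟨T', x'⟩, _⟩ hclose => ?_⟩
  obtain ⟨hT', hx'⟩ : dist T' T < ε / 4 ∧ dist x' x < ε / 4 := by
    simpa [Subtype.dist_eq, Prod.dist_eq] using hclose
  have hfar' := le_abs_sub_iterate_regMap A σ (abs_le.2 ⟨by linarith, ha1.le⟩)
    (by linarith : 2 * (ε / 4) < ε) hfar hT'.le hx'.le
  refine (ENNReal.ofReal_pos.2 (half_pos hε)).trans_le (ofReal_le_orbitGap A σ fun t e => ?_)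
  linarith [hfar' t e]
end

section
/- Let d ≥ 1 be a natural number and let a ∈ ℝ satisfy 0 < a < 1/(d+1). Define Ω := { Σ_{s=0}^{N−1} a^s·k_s : N ≥ 1, (k_0,…,k_{N−1}) ∈ {0,1,…,d}^N }. Then the closure of Ω in ℝ has Hausdorff dimension at most log(d+1)/log(1/a), which is strictly less than 1; in particular, the closure of Ω has Lebesgue measure zero. -/
open Set Filter MeasureTheory Metric Topology

/-!
Every point of the closure of `Ω` is an infinite digit expansion `∑' s, a ^ s * g s`, and fixing
the first `n` digits confines such an expansion to an interval of length `d / (1 - a) * a ^ n`.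
So for each `n` the closure is covered by `(d + 1) ^ n` intervals of that length. For
`r = log (d + 1) / log (1 / a)` we have `(d + 1) * a ^ r = 1`, so the `r`-th powers of the lengths
sum to a constant independent of `n`, and `μH[r]` of the closure is finite. Finally `d + 1 < 1 / a`
gives `r < 1`, and a subset of `ℝ` of dimension `< 1` is Lebesgue-null.
-/

section CoveringDimension

variable {X : Type*} [EMetricSpace X] [MeasurableSpace X] [BorelSpace X]

theorem hausdorffMeasure_le_of_forall_subset_iUnion_pow {s : Set X} {m : ℕ} {a C r : ℝ}
    (ha0 : 0 ≤ a) (ha1 : a < 1) (hC : 0 ≤ C) (hr : 0 ≤ r) (hmr : m * a ^ r ≤ 1)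
    (t : ∀ n : ℕ, (Fin n → Fin m) → Set X)
    (hdiam : ∀ n k, ediam (t n k) ≤ ENNReal.ofReal (C * a ^ n))
    (hcover : ∀ n, s ⊆ ⋃ k, t n k) :
    μH[r] s ≤ ENNReal.ofReal (C ^ r) := by
  have hsum (n : ℕ) : ∑ k, ediam (t n k) ^ r ≤ ENNReal.ofReal (C ^ r) :=
    calc ∑ k, ediam (t n k) ^ r
        ≤ ∑ _k : Fin n → Fin m, ENNReal.ofReal (C * a ^ n) ^ r :=
          Finset.sum_le_sum fun k _ => ENNReal.rpow_le_rpow (hdiam n k) hr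
      _ = ENNReal.ofReal (C ^ r * (m * a ^ r) ^ n) := by
          rw [Finset.sum_const, Finset.card_univ, Fintype.card_fun, Fintype.card_fin,
            Fintype.card_fin, nsmul_eq_mul, ENNReal.ofReal_rpow_of_nonneg (by positivity) hr,
            ← ENNReal.ofReal_natCast, ← ENNReal.ofReal_mul (by positivity),
            Real.mul_rpow hC (by positivity), ← Real.rpow_natCast, ← Real.rpow_mul ha0,
            mul_comm (n : ℝ), Real.rpow_mul ha0, Real.rpow_natCast]
          push_cast
          ring_nf
      _ ≤ ENNReal.ofReal (C ^ r) := ENNReal.ofReal_le_ofReal <|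
          mul_le_of_le_one_right (by positivity) (pow_le_one₀ (by positivity) hmr)
  have hlim : Tendsto (fun n : ℕ => ENNReal.ofReal (C * a ^ n)) atTop (𝓝 0) := by
    simpa using ENNReal.tendsto_ofReal
      ((tendsto_pow_atTop_nhds_zero_of_lt_one ha0 ha1).const_mul C)
  calc μH[r] s ≤ liminf (fun n => ∑ k, ediam (t n k) ^ r) atTop :=
        Measure.hausdorffMeasure_le_liminf_sum r s _ hlim t (.of_forall hdiam) (.of_forall hcover)
    _ ≤ ENNReal.ofReal (C ^ r) := liminf_le_of_frequently_le' (.of_forall hsum)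

theorem dimH_le_of_forall_subset_iUnion_pow {s : Set X} {m : ℕ} {a C : ℝ}
    (ha0 : 0 < a) (ha1 : a < 1) (hC : 0 ≤ C)
    (t : ∀ n : ℕ, (Fin n → Fin m) → Set X)
    (hdiam : ∀ n k, ediam (t n k) ≤ ENNReal.ofReal (C * a ^ n))
    (hcover : ∀ n, s ⊆ ⋃ k, t n k) :
    dimH s ≤ ENNReal.ofReal (Real.log m / Real.log (1 / a)) := by
  set r := Real.log m / Real.log (1 / a)
  have hr : 0 ≤ r :=
    div_nonneg (Real.log_natCast_nonneg m) (Real.log_pos (one_lt_one_div ha0 ha1)).le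
  have hmr : m * a ^ r ≤ 1 := by
    rcases Nat.eq_zero_or_pos m with rfl | hm
    · simp
    have : r = -Real.logb a m := by
      simp only [r, Real.logb, one_div, Real.log_inv, div_neg]
    rw [this, Real.rpow_neg ha0.le, Real.rpow_logb ha0 ha1.ne (by exact_mod_cast hm),
      mul_inv_cancel₀ (by positivity)]
  have hμ := hausdorffMeasure_le_of_forall_subset_iUnion_pow ha0.le ha1 hC hr hmr t hdiam hcover
  exact dimH_le_of_hausdorffMeasure_ne_top (d := r.toNNReal) <| by
    rw [Real.coe_toNNReal r hr]
    exact ne_top_of_le_ne_top ENNReal.ofReal_ne_top hμ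

end CoveringDimension

theorem Real.volume_eq_zero_of_dimH_lt_one {s : Set ℝ} (h : dimH s < 1) : volume s = 0 := by
  rw [← hausdorffMeasure_real]
  exact_mod_cast hausdorffMeasure_of_dimH_lt (d := 1) (by simpa using h)

def digitSums (d : ℕ) (a : ℝ) : Set ℝ :=
  {x | ∃ N : ℕ, 1 ≤ N ∧ ∃ k : Fin N → ℕ, (∀ s, k s ≤ d) ∧
    x = ∑ s : Fin N, a ^ (s : ℕ) * k s}

noncomputable def digitExpansion {m : ℕ} (a : ℝ) (g : ℕ → Fin m) : ℝ :=
  ∑' s, a ^ s * (g s : ℕ)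

def digitPrefix {n m : ℕ} (a : ℝ) (k : Fin n → Fin m) : ℝ :=
  ∑ s : Fin n, a ^ (s : ℕ) * (k s : ℕ)

theorem digitExpansion_mem_Icc {d : ℕ} {a : ℝ} (ha0 : 0 ≤ a) (ha1 : a < 1)
    (g : ℕ → Fin (d + 1)) (n : ℕ) :
    digitExpansion a g ∈ Icc (digitPrefix a fun s : Fin n => g s)
      (digitPrefix a (fun s : Fin n => g s) + d / (1 - a) * a ^ n) := by
  set f : ℕ → ℝ := fun s => a ^ s * (g s : ℕ)
  have hf0 (s : ℕ) : 0 ≤ f s := by positivity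
  have hfd (s : ℕ) : f s ≤ d * a ^ s := by
    simp only [f, mul_comm (d : ℝ)]
    gcongr
    exact_mod_cast (g s).is_le
  have hgeom := summable_geometric_of_lt_one ha0 ha1
  have hf : Summable f := (hgeom.mul_left (d : ℝ)).of_nonneg_of_le hf0 hfd
  have htail : ∑' s, f (s + n) ≤ d / (1 - a) * a ^ n :=
    calc ∑' s, f (s + n) ≤ ∑' s, d * a ^ n * a ^ s :=
          ((summable_nat_add_iff n).2 hf).tsum_le_tsum
            (fun s => by simpa [pow_add, mul_assoc, mul_comm, mul_left_comm] using hfd (s + n))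
            (hgeom.mul_left _)
      _ = d / (1 - a) * a ^ n := by
          rw [tsum_mul_left, tsum_geometric_of_lt_one ha0 ha1]; ring
  have hsplit : digitExpansion a g = digitPrefix a (fun s : Fin n => g s) + ∑' s, f (s + n) := by
    rw [digitExpansion, ← hf.sum_add_tsum_nat_add n, digitPrefix, ← Fin.sum_univ_eq_sum_range]
  rw [hsplit]
  exact ⟨le_add_of_nonneg_right (tsum_nonneg fun s => hf0 _), by gcongr⟩

theorem digitSums_subset_range_digitExpansion (d : ℕ) (a : ℝ) :
    digitSums d a ⊆ range (digitExpansion (m := d + 1) a) := by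
  rintro x ⟨N, -, k, hk, rfl⟩
  refine ⟨fun s => if h : s < N then ⟨k ⟨s, h⟩, Nat.lt_succ_of_le (hk _)⟩ else 0, ?_⟩
  rw [digitExpansion, tsum_eq_sum (s := Finset.range N) fun s hs => by
    simp [Finset.mem_range.not.1 hs], ← Fin.sum_univ_eq_sum_range]
  simp

theorem closure_digitSums_subset_iUnion {d : ℕ} {a : ℝ} (ha0 : 0 ≤ a) (ha1 : a < 1)
    (n : ℕ) :
    closure (digitSums d a) ⊆ ⋃ k : Fin n → Fin (d + 1),
      Icc (digitPrefix a k) (digitPrefix a k + d / (1 - a) * a ^ n) :=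
  closure_minimal
    (fun _ hx => by
      obtain ⟨g, rfl⟩ := digitSums_subset_range_digitExpansion d a hx
      exact mem_iUnion.2 ⟨_, digitExpansion_mem_Icc ha0 ha1 g n⟩)
    (isClosed_iUnion_of_finite fun _ => isClosed_Icc)

theorem closure_digitSums_dimH_lt_one_general (d : ℕ) (a : ℝ)
    (ha0 : 0 < a) (ha : a < 1 / (d + 1)) :
    dimH (closure {x : ℝ | ∃ N : ℕ, 1 ≤ N ∧ ∃ k : Fin N → ℕ, (∀ s, k s ≤ d) ∧
        x = ∑ s : Fin N, a ^ (s : ℕ) * k s}) ≤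
      ENNReal.ofReal (Real.log (d + 1) / Real.log (1 / a)) ∧
    Real.log (d + 1) / Real.log (1 / a) < 1 ∧
    MeasureTheory.volume (closure {x : ℝ | ∃ N : ℕ, 1 ≤ N ∧ ∃ k : Fin N → ℕ,
        (∀ s, k s ≤ d) ∧ x = ∑ s : Fin N, a ^ (s : ℕ) * k s}) = 0 := by
  have hd : (d : ℝ) + 1 < 1 / a := (lt_one_div ha0 (by positivity)).1 ha
  have ha1 : a < 1 := ha.trans_le (div_le_one_of_le₀ (by simp) (by positivity))
  have hdim : dimH (closure (digitSums d a)) ≤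
      ENNReal.ofReal (Real.log (d + 1) / Real.log (1 / a)) := by
    have := dimH_le_of_forall_subset_iUnion_pow ha0 ha1 (C := d / (1 - a))
      (div_nonneg d.cast_nonneg (sub_nonneg.2 ha1.le)) _
      (fun n k => by rw [Real.ediam_Icc, add_sub_cancel_left])
      (closure_digitSums_subset_iUnion ha0.le ha1)
    exact_mod_cast this
  have hlt : Real.log (d + 1) / Real.log (1 / a) < 1 := by
    have hlog := Real.log_lt_log (by positivity) hd
    rw [div_lt_one ((Real.log_nonneg (by simp)).trans_lt hlog)]
    exact hlog
  refine ⟨hdim, hlt, Real.volume_eq_zero_of_dimH_lt_one (hdim.trans_lt ?_)⟩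
  simpa using hlt

/-- Let `d ≥ 1` and `0 < a < 1/(d+1)`. Let
`Ω = { Σ_{s=0}^{N-1} a^s k_s : N ≥ 1, k_s ∈ {0,…,d} }`. Then the closure of `Ω` has
Hausdorff dimension at most `log(d+1)/log(1/a)`, which is strictly less than `1`;
in particular the closure of `Ω` has Lebesgue measure zero. -/
theorem closure_digitSums_dimH_lt_one (d : ℕ) (hd : 1 ≤ d) (a : ℝ)
    (ha0 : 0 < a) (ha : a < 1 / (d + 1)) :
    dimH (closure {x : ℝ | ∃ N : ℕ, 1 ≤ N ∧ ∃ k : Fin N → ℕ, (∀ s, k s ≤ d) ∧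
        x = ∑ s : Fin N, a ^ (s : ℕ) * k s}) ≤
      ENNReal.ofReal (Real.log (d + 1) / Real.log (1 / a)) ∧
    Real.log (d + 1) / Real.log (1 / a) < 1 ∧
    MeasureTheory.volume (closure {x : ℝ | ∃ N : ℕ, 1 ≤ N ∧ ∃ k : Fin N → ℕ,
        (∀ s, k s ≤ d) ∧ x = ∑ s : Fin N, a ^ (s : ℕ) * k s}) = 0 :=
  closure_digitSums_dimH_lt_one_general d a ha0 ha
end

section
/- Let V be a finite vertex set, G = (V, A) a digraph, and Ḡ = (V̄, Ā) a subgraph of G (V̄ ⊆ V, Ā ⊆ A ∩ (V̄ × V̄)); write Id_osc(v) := #{u ∈ V̄ : (u,v) ∈ Ā} and assume Id_osc(v) ≥ 1 for every v ∈ V̄. Let a ∈ [0,1), T ∈ [0,1]^A, σ ∈ {−1,1}^A, and let σ̄ be the restriction of σ to Ā. Let x ∈ [0,1]^V and put D(v) := Σ_{(u,v) ∈ A∖Ā} H(σ_{(u,v)}(x_u − T_{(u,v)})) for v ∈ V̄. Define Φ_V(x)_v := (Id(v)·x_v − D(v))/Id_osc(v) for v ∈ V̄, and Φ_A(T)_{(u,v)}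 := (Id(u)·T_{(u,v)} − D(u))/Id_osc(u) for (u,v) ∈ Ā. Then for every v ∈ V̄: (Id(v)·F_{G,σ,T,a}(x)_v − D(v))/Id_osc(v) = a·Φ_V(x)_v + (1−a)·(1/Id_osc(v))·Σ_{u:(u,v)∈Ā} H(σ̄_{(u,v)}(Φ_V(x)_u − Φ_A(T)_{(u,v)})); that is, the restricted dynamics is conjugate, via the affine change of variables Φ_V and Φ_A, to one step of the isolated network F_{Ḡ,σ̄,Φ_A(T),a}. -/
open MeasureTheory Filter Topology
open scoped ENNReal

variable {V : Type*} [Fintype V] [DecidableEq V]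

/-- The arrow set `Ā` of a subnetwork `Ḡ = (V̄,Ā)` viewed as a finset of arrows between
vertices of `V̄` (so that `Ḡ` can be considered as an isolated regulatory network). -/
def subArrows {V : Type*} [Fintype V] [DecidableEq V] (Vb : Finset V)
    (Ab : Finset (V × V)) : Finset ({v // v ∈ Vb} × {v // v ∈ Vb}) :=
  Finset.univ.filter fun p => (p.1.val, p.2.val) ∈ Ab


lemma heaviside_pos_mul {c s : ℝ} (hc : 0 < c) : heaviside (c * s) = heaviside s := by
  unfold heaviside
  by_cases h : 0 ≤ s
  · rw [if_pos h, if_pos (mul_nonneg hc.le h)]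
  · rw [if_neg h, if_neg]
    push_neg at h ⊢
    exact mul_neg_of_pos_of_neg hc h

lemma heaviside_affine_arg (b : Bool) (Id Io xx tt dd : ℝ) (hId : 0 < Id) (hIo : 0 < Io) :
    heaviside (signVal b * ((Id * xx - dd) / Io - (Id * tt - dd) / Io))
      = heaviside (signVal b * (xx - tt)) := by
  have h : signVal b * ((Id * xx - dd) / Io - (Id * tt - dd) / Io)
      = (Id / Io) * (signVal b * (xx - tt)) := by
    field_simp
    ring
  rw [h, heaviside_pos_mul (div_pos hId hIo)]

/-- Let `Ḡ = (V̄,Ā)` be a subgraph of `G = (V,A)` with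
`Id_osc(v) = #{u ∈ V̄ : (u,v) ∈ Ā} ≥ 1` for every `v ∈ V̄`, and let
`D(v) = Σ_{(u,v) ∈ A∖Ā} H(σ_{(u,v)}(x_u - T_{(u,v)}))`. With the affine change of
variables `Φ_V(x)_v = (Id(v)·x_v - D(v))/Id_osc(v)` and
`Φ_A(T)_{(u,v)} = (Id(u)·T_{(u,v)} - D(u))/Id_osc(u)`, one step of the restricted dynamics
is conjugate to one step of the isolated network: for every `v ∈ V̄`,
`(Id(v)·F_{G,σ,T,a}(x)_v - D(v))/Id_osc(v) = F_{Ḡ,σ̄,Φ_A(T),a}(Φ_V(x))_v`, where `σ̄` is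
the restriction of `σ` to `Ā`. -/
theorem restricted_dynamics_conjugate (V : Type*) [Fintype V] [DecidableEq V]
    (A : Finset (V × V)) (Vb : Finset V) (Ab : Finset (V × V))
    (hAbA : Ab ⊆ A) (hAbV : Ab ⊆ Vb ×ˢ Vb)
    (hosc : ∀ vb : {v // v ∈ Vb}, 1 ≤ inDeg (subArrows Vb Ab) vb)
    (σ : {e // e ∈ A} → Bool) (T : {e // e ∈ A} → ℝ) (a : ℝ) (ha0 : 0 ≤ a) (ha1 : a < 1)
    (x : V → ℝ) (D : V → ℝ)
    (hD : D = fun v => ∑ e ∈ A.attach.filter (fun e => e.val.2 = v ∧ e.val ∉ Ab),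
      heaviside (signVal (σ e) * (x e.val.1 - T e))) :
    ∀ vb : {v // v ∈ Vb},
      ((inDeg A vb.val : ℝ) * regMap A σ T a x vb.val - D vb.val)
          / (inDeg (subArrows Vb Ab) vb : ℝ)
      = regMap (subArrows Vb Ab)
          (fun eb => σ ⟨(eb.val.1.val, eb.val.2.val), hAbA (Finset.mem_filter.mp eb.prop).2⟩)
          (fun eb => ((inDeg A eb.val.1.val : ℝ) *
                T ⟨(eb.val.1.val, eb.val.2.val), hAbA (Finset.mem_filter.mp eb.prop).2⟩
                - D eb.val.1.val) / (inDeg (subArrows Vb Ab) eb.val.1 : ℝ)) a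
          (fun u => ((inDeg A u.val : ℝ) * x u.val - D u.val)
              / (inDeg (subArrows Vb Ab) u : ℝ)) vb := by
  intro vb
  subst hD
  have hId1 : ∀ u : {v // v ∈ Vb}, 1 ≤ inDeg A u.val := by
    intro u
    have h1 := hosc u
    rw [inDeg, Finset.one_le_card] at h1 ⊢
    obtain ⟨p, hp⟩ := h1
    rw [Finset.mem_filter] at hp
    have hmem : (p.1.val, p.2.val) ∈ Ab := (Finset.mem_filter.mp hp.1).2
    exact ⟨(p.1.val, p.2.val), Finset.mem_filter.mpr ⟨hAbA hmem, by simp [hp.2]⟩⟩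
  have hIo : ∀ u : {v // v ∈ Vb}, (0:ℝ) < (inDeg (subArrows Vb Ab) u : ℝ) := by
    intro u; exact_mod_cast hosc u
  have hIdpos : ∀ u : {v // v ∈ Vb}, (0:ℝ) < (inDeg A u.val : ℝ) := by
    intro u; exact_mod_cast hId1 u
  simp only [regMap]
  -- rewrite each summand on the RHS
  have hsum : ∑ eb ∈ (subArrows Vb Ab).attach.filter (fun eb => eb.val.2 = vb),
      heaviside (signVal (σ ⟨(eb.val.1.val, eb.val.2.val),
          hAbA (Finset.mem_filter.mp eb.prop).2⟩) *
        (((inDeg A eb.val.1.val : ℝ) * x eb.val.1.val -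
            ∑ e ∈ A.attach.filter (fun e => e.val.2 = eb.val.1.val ∧ e.val ∉ Ab),
              heaviside (signVal (σ e) * (x e.val.1 - T e))) /
            (inDeg (subArrows Vb Ab) eb.val.1 : ℝ) -
          ((inDeg A eb.val.1.val : ℝ) *
              T ⟨(eb.val.1.val, eb.val.2.val), hAbA (Finset.mem_filter.mp eb.prop).2⟩ -
            ∑ e ∈ A.attach.filter (fun e => e.val.2 = eb.val.1.val ∧ e.val ∉ Ab),
              heaviside (signVal (σ e) * (x e.val.1 - T e))) /
            (inDeg (subArrows Vb Ab) eb.val.1 : ℝ)))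
      = ∑ e ∈ A.attach.filter (fun e => e.val.2 = vb.val ∧ e.val ∈ Ab),
          heaviside (signVal (σ e) * (x e.val.1 - T e)) := by
    refine Finset.sum_bij'
      (i := fun eb _ => (⟨(eb.val.1.val, eb.val.2.val),
        hAbA (Finset.mem_filter.mp eb.prop).2⟩ : {e // e ∈ A}))
      (j := fun e he => (⟨(⟨e.val.1,
          (Finset.mem_product.mp (hAbV (Finset.mem_filter.mp he).2.2)).1⟩,
        ⟨e.val.2, (Finset.mem_product.mp (hAbV (Finset.mem_filter.mp he).2.2)).2⟩),
        Finset.mem_filter.mpr ⟨Finset.mem_univ _,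
          by simpa using (Finset.mem_filter.mp he).2.2⟩⟩ :
        {p // p ∈ subArrows Vb Ab}))
      ?_ ?_ ?_ ?_ ?_
    · intro eb heb
      have h2 : eb.val.2 = vb := (Finset.mem_filter.mp heb).2
      refine Finset.mem_filter.mpr ⟨Finset.mem_attach _ _, ⟨?_, ?_⟩⟩
      · simp [h2]
      · simpa using (Finset.mem_filter.mp eb.prop).2
    · intro e he
      refine Finset.mem_filter.mpr ⟨Finset.mem_attach _ _, ?_⟩
      exact Subtype.ext (Finset.mem_filter.mp he).2.1
    · intro eb heb; rfl
    · intro e he; rfl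
    · intro eb heb
      exact heaviside_affine_arg _ _ _ _ _ _ (hIdpos eb.val.1) (hIo eb.val.1)
  rw [hsum]
  -- split the LHS sum into the Ab-part and the complement
  have hsplit := Finset.sum_filter_add_sum_filter_not
    (A.attach.filter (fun e => e.val.2 = vb.val)) (fun e => e.val ∈ Ab)
    (fun e => heaviside (signVal (σ e) * (x e.val.1 - T e)))
  rw [Finset.filter_filter, Finset.filter_filter] at hsplit
  rw [← hsplit]
  have hIov := hIo vb
  have hIdv := hIdpos vb
  field_simp
  ring
end

section
/- Let V be a finite vertex set, G = (V, A) a digraph, σ ∈ {−1,1}^A, a ∈ [0,1), T̃ ∈ [0,1]^A, and suppose ỹ ∈ [0,1]^V and τ ≥ 1 satisfy F_{G,σ,T̃,a}^τ(ỹ) = ỹ and min_{0≤t<τ} d_max(F_{G,σ,T̃,a}^t(ỹ), Δ_{T̃}) = 2ε for some ε > 0. Then for every T ∈ [0,1]^A with d_max(T, T̃) < ε and every y ∈ [0,1]^V with d_max(y, ỹ) < ε, the oscillatory subnetwork is unchanged: G_osc(F_{G,σ,T,a}, y) = G_osc(F_{G,σ,T̃,a}, ỹ). -/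
open MeasureTheory Filter Topology
open scoped ENNReal

variable {V : Type*} [Fintype V] [DecidableEq V]

/-- Arrow set of the oscillatory subnetwork: arrows `(u,v) ∈ A` whose activation state
`t ↦ H(σ_{(u,v)}(F^t(x)_u - T_{(u,v)}))` is not eventually constant. -/
noncomputable def oscA {V : Type*} [Fintype V] [DecidableEq V] (A : Finset (V × V))
    (σ : {e // e ∈ A} → Bool) (T : {e // e ∈ A} → ℝ) (a : ℝ) (x : V → ℝ) : Set (V × V) :=
  {e | ∃ h : e ∈ A, ¬ ∃ N : ℕ, ∀ t, N ≤ t →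
    heaviside (signVal (σ ⟨e, h⟩) * ((regMap A σ T a)^[t] x e.1 - T ⟨e, h⟩)) =
    heaviside (signVal (σ ⟨e, h⟩) * ((regMap A σ T a)^[N] x e.1 - T ⟨e, h⟩))}

/-- Vertex set of the oscillatory subnetwork. -/
noncomputable def oscV {V : Type*} [Fintype V] [DecidableEq V] (A : Finset (V × V))
    (σ : {e // e ∈ A} → Bool) (T : {e // e ∈ A} → ℝ) (a : ℝ) (x : V → ℝ) : Set V :=
  {v | ∃ u, (u, v) ∈ oscA A σ T a x ∨ (v, u) ∈ oscA A σ T a x}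

lemma heaviside_congr {s s' : ℝ} (h : |s - s'| < |s'|) : heaviside s = heaviside s' := by
  have h0 : s' ≠ 0 := by rintro rfl; simp at h; linarith [abs_nonneg s]
  rcases h0.lt_or_gt with hlt | hgt
  · have hs : s < 0 := by
      have := abs_lt.1 h
      rw [abs_of_neg hlt] at this; linarith [this.2]
    simp [heaviside, not_le.2 hs, not_le.2 hlt]
  · have hs : 0 < s := by
      have := abs_lt.1 h
      rw [abs_of_pos hgt] at this; linarith [this.1]
    simp [heaviside, hs.le, hgt.le]

lemma heaviside_signVal_congr (b : Bool) {u u' : ℝ} (h : |u - u'| < |u'|) :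
    heaviside (signVal b * u) = heaviside (signVal b * u') := by
  apply heaviside_congr
  have hb : |signVal b| = 1 := by cases b <;> simp [signVal]
  rw [← mul_sub, abs_mul, abs_mul, hb, one_mul, one_mul]
  exact h

lemma heaviside_nonneg (s : ℝ) : 0 ≤ heaviside s := by
  unfold heaviside; split <;> norm_num

lemma heaviside_le_one (s : ℝ) : heaviside s ≤ 1 := by
  unfold heaviside; split <;> norm_num

lemma card_filter_attach_s18 {V : Type*} [DecidableEq V] (A : Finset (V × V)) (v : V) :
    (A.attach.filter (fun e => e.val.2 = v)).card = inDeg A v := by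
  rw [Finset.filter_attach (fun e => e.2 = v) A, Finset.card_map, Finset.card_attach]
  rfl

lemma regMap_mem_cube {V : Type*} [Fintype V] [DecidableEq V] (A : Finset (V × V))
    (σ : {e // e ∈ A} → Bool) (T : {e // e ∈ A} → ℝ) {a : ℝ} (ha0 : 0 ≤ a) (ha1 : a ≤ 1)
    {x : V → ℝ} (hx : x ∈ cubeV V) : regMap A σ T a x ∈ cubeV V := by
  intro v _
  have hxv := hx v (Set.mem_univ v)
  set s := ∑ e ∈ A.attach.filter (fun e => e.val.2 = v),
      heaviside (signVal (σ e) * (x e.val.1 - T e)) with hs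
  have hs0 : 0 ≤ s := Finset.sum_nonneg fun e _ => heaviside_nonneg _
  have hsle : s ≤ (inDeg A v : ℝ) := by
    calc s ≤ ∑ _e ∈ A.attach.filter (fun e => e.val.2 = v), (1:ℝ) :=
          Finset.sum_le_sum fun e _ => heaviside_le_one _
      _ = ((A.attach.filter (fun e => e.val.2 = v)).card : ℝ) := by simp
      _ = (inDeg A v : ℝ) := by rw [card_filter_attach_s18]
  have hq0 : 0 ≤ (inDeg A v : ℝ)⁻¹ * s := by positivity
  have hq1 : (inDeg A v : ℝ)⁻¹ * s ≤ 1 := by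
    rcases Nat.eq_zero_or_pos (inDeg A v) with h0 | hpos
    · simp [h0]
    · have hd : (0:ℝ) < (inDeg A v : ℝ) := by exact_mod_cast hpos
      rw [inv_mul_le_iff₀ hd, mul_one]; exact hsle
  simp only [Set.mem_Icc] at hxv
  constructor
  · simp only [regMap]; rw [← hs]; nlinarith [hxv.1, hxv.2]
  · simp only [regMap]; rw [← hs]; nlinarith [hxv.1, hxv.2]


/-- Suppose `ỹ ∈ [0,1]^V` is `τ`-periodic for `F_{G,σ,T̃,a}` (`τ ≥ 1`) and
`min_{0 ≤ t < τ} d_max(F_{G,σ,T̃,a}^t(ỹ), Δ_{T̃}) = 2ε` with `ε > 0`. Then for every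
`T ∈ [0,1]^A` with `d_max(T,T̃) < ε` and every `y ∈ [0,1]^V` with `d_max(y,ỹ) < ε`, the
oscillatory subnetwork is unchanged: `G_osc(F_{G,σ,T,a}, y) = G_osc(F_{G,σ,T̃,a}, ỹ)`. -/
theorem osc_stable_under_perturbation (V : Type*) [Fintype V] [DecidableEq V]
    (A : Finset (V × V)) (σ : {e // e ∈ A} → Bool) (a : ℝ) (ha0 : 0 ≤ a) (ha1 : a < 1)
    (Tt : {e // e ∈ A} → ℝ) (hTt : Tt ∈ cubeA A) (yt : V → ℝ) (hyt : yt ∈ cubeV V)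
    (τ : ℕ) (hτ : 1 ≤ τ) (hper : (regMap A σ Tt a)^[τ] yt = yt)
    (ε : ℝ) (hε : 0 < ε)
    (hmin : (⨅ t ∈ Finset.range τ,
        EMetric.infEdist ((regMap A σ Tt a)^[t] yt) (discSet A Tt))
      = ENNReal.ofReal (2 * ε)) :
    ∀ T ∈ cubeA A, dist T Tt < ε →
    ∀ y ∈ cubeV V, dist y yt < ε →
      oscA A σ T a y = oscA A σ Tt a yt ∧ oscV A σ T a y = oscV A σ Tt a yt := by
  intro T hT hdT y hy hdy
  set F := regMap A σ T a with hF
  set Ft := regMap A σ Tt a with hFt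
  -- orbit of yt stays in the cube
  have hz_cube : ∀ t, Ft^[t] yt ∈ cubeV V := by
    intro t
    induction t with
    | zero => simpa using hyt
    | succ t ih =>
      rw [Function.iterate_succ_apply']
      exact regMap_mem_cube A σ Tt ha0 ha1.le ih
  -- periodicity
  have hperiodic : ∀ t, Ft^[t] yt = Ft^[t % τ] yt := by
    intro t
    have hp : Function.IsPeriodicPt Ft τ yt := hper
    exact (hp.iterate_mod_apply t).symm
  -- gap: every point of the periodic orbit is 2ε-far from every threshold hyperplane
  have hgap : ∀ t (e : {e // e ∈ A}), 2 * ε ≤ |Ft^[t] yt e.val.1 - Tt e| := by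
    intro t e
    rw [hperiodic t]
    set t' := t % τ with ht'
    have ht'lt : t' < τ := Nat.mod_lt _ (by omega)
    set z := Ft^[t'] yt with hzdef
    have hlow : ENNReal.ofReal (2 * ε) ≤ EMetric.infEdist z (discSet A Tt) := by
      rw [← hmin]
      exact biInf_le _ (Finset.mem_range.2 ht'lt)
    set w := Function.update z e.val.1 (Tt e) with hw
    have hwmem : w ∈ discSet A Tt := by
      refine ⟨fun i _ => ?_, e, by simp [hw]⟩
      by_cases hi : i = e.val.1
      · subst hi; simpa [hw] using hTt e (Set.mem_univ e)
      · simpa [hw, Function.update_of_ne hi] using hz_cube t' i (Set.mem_univ i)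
    have h1 : EMetric.infEdist z (discSet A Tt) ≤ edist z w :=
      EMetric.infEdist_le_edist_of_mem hwmem
    have h2 : dist z w ≤ |z e.val.1 - Tt e| := by
      refine (dist_pi_le_iff (abs_nonneg _)).2 fun i => ?_
      by_cases hi : i = e.val.1
      · subst hi; rw [Real.dist_eq]; simp [hw]
      · simp [hw, Function.update_of_ne hi, abs_nonneg]
    have h3 : ENNReal.ofReal (2 * ε) ≤ ENNReal.ofReal (dist z w) := by
      rw [← edist_dist]; exact hlow.trans h1
    have h4 : 2 * ε ≤ dist z w :=
      (ENNReal.ofReal_le_ofReal_iff dist_nonneg).1 h3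
    linarith
  -- Heaviside matching given closeness
  have hHt : ∀ t, dist (F^[t] y) (Ft^[t] yt) < ε → ∀ e : {e // e ∈ A},
      heaviside (signVal (σ e) * (F^[t] y e.val.1 - T e)) =
      heaviside (signVal (σ e) * (Ft^[t] yt e.val.1 - Tt e)) := by
    intro t hd e
    apply heaviside_signVal_congr
    have h1 : |F^[t] y e.val.1 - Ft^[t] yt e.val.1| < ε := by
      have := dist_le_pi_dist (F^[t] y) (Ft^[t] yt) e.val.1
      rw [Real.dist_eq] at this; linarith
    have h2 : |T e - Tt e| < ε := by
      have := dist_le_pi_dist T Tt e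
      rw [Real.dist_eq] at this; linarith
    have h3 := hgap t e
    have : |(F^[t] y e.val.1 - T e) - (Ft^[t] yt e.val.1 - Tt e)| < 2 * ε := by
      calc |(F^[t] y e.val.1 - T e) - (Ft^[t] yt e.val.1 - Tt e)|
          ≤ |F^[t] y e.val.1 - Ft^[t] yt e.val.1| + |T e - Tt e| := by
            rw [← Real.dist_eq, ← Real.dist_eq, ← Real.dist_eq]
            exact dist_sub_sub_le _ _ _ _
        _ < 2 * ε := by linarith
    linarith [abs_nonneg (Ft^[t] yt e.val.1 - Tt e)]
  -- orbits stay ε-close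
  have hdist : ∀ t, dist (F^[t] y) (Ft^[t] yt) < ε := by
    intro t
    induction t with
    | zero => simpa using hdy
    | succ t ih =>
      have hH := hHt t ih
      have hstep : dist (F^[t + 1] y) (Ft^[t + 1] yt) ≤ dist (F^[t] y) (Ft^[t] yt) := by
        refine (dist_pi_le_iff dist_nonneg).2 fun v => ?_
        rw [Function.iterate_succ_apply', Function.iterate_succ_apply']
        have hsum : ∑ e ∈ A.attach.filter (fun e => e.val.2 = v),
            heaviside (signVal (σ e) * (F^[t] y e.val.1 - T e)) =
            ∑ e ∈ A.attach.filter (fun e => e.val.2 = v),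
            heaviside (signVal (σ e) * (Ft^[t] yt e.val.1 - Tt e)) :=
          Finset.sum_congr rfl fun e _ => hH e
        have hkey : F (F^[t] y) v - Ft (Ft^[t] yt) v = a * (F^[t] y v - Ft^[t] yt v) := by
          simp only [hF, hFt, regMap]
          rw [hsum]; ring
        rw [Real.dist_eq, hkey, abs_mul, abs_of_nonneg ha0]
        have hcoord : |F^[t] y v - Ft^[t] yt v| ≤ dist (F^[t] y) (Ft^[t] yt) := by
          have := dist_le_pi_dist (F^[t] y) (Ft^[t] yt) v
          rwa [Real.dist_eq] at this
        nlinarith [abs_nonneg (F^[t] y v - Ft^[t] yt v)]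
      linarith
  have hH : ∀ t (e : {e // e ∈ A}),
      heaviside (signVal (σ e) * (F^[t] y e.val.1 - T e)) =
      heaviside (signVal (σ e) * (Ft^[t] yt e.val.1 - Tt e)) :=
    fun t => hHt t (hdist t)
  have hosc : oscA A σ T a y = oscA A σ Tt a yt := by
    ext e
    simp only [oscA, Set.mem_setOf_eq]
    constructor
    · rintro ⟨h, hne⟩
      refine ⟨h, fun hc => hne ?_⟩
      obtain ⟨N, hN⟩ := hc
      exact ⟨N, fun t ht => by rw [hH t ⟨e, h⟩, hH N ⟨e, h⟩]; exact hN t ht⟩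
    · rintro ⟨h, hne⟩
      refine ⟨h, fun hc => hne ?_⟩
      obtain ⟨N, hN⟩ := hc
      exact ⟨N, fun t ht => by rw [← hH t ⟨e, h⟩, ← hH N ⟨e, h⟩]; exact hN t ht⟩
  refine ⟨hosc, ?_⟩
  unfold oscV
  rw [hosc]
end
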